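/- arXiv:1708.07788 — 3 statements merged into one kernel-verified Lean document; each statement's English description precedes it below -/
import Mathlib

section
/- Let A be an n×n real symmetric positive definite matrix, Q an n×k real matrix, q_{k+1} ∈ ℝⁿ, β_{k+1} ∈ ℝ, and T a k×k real symmetric tridiagonal matrix such that A·Q = Q·T + β_{k+1}·q_{k+1}·e_kᵀ and the n×(k+1) matrix [Q, q_{k+1}] has orthonormal columns. Let x ∈ ℝⁿ be nonzero with Q·e₁ = x/‖x‖. Then T is invertible, and with y_k := ‖x‖ · Q·T⁻¹·e₁, for every real polynomial p of degree less than k and every real D such that |p(λ) − 1/λ| ≤ D for every eigenvalue λ of A, one has ‖A⁻¹x − y_k‖ ≤ √(λmax(A)/λmin(A)) · D · ‖x‖. -/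
open Matrix Polynomial Set

/-- Euclidean norm of a vector in `ℝⁿ`. -/
noncomputable def vecNorm {n : ℕ} (v : Fin n → ℝ) : ℝ :=
  Real.sqrt (∑ i, v i ^ 2)

/-- Spectral (operator) norm of a real matrix. -/
noncomputable def matNorm {m n : ℕ} (A : Matrix (Fin m) (Fin n) ℝ) : ℝ :=
  sSup {c : ℝ | ∃ v : Fin n → ℝ, vecNorm v ≤ 1 ∧ c = vecNorm (A.mulVec v)}

/-- Largest eigenvalue of a square real matrix. -/
noncomputable def lmax {n : ℕ} (A : Matrix (Fin n) (Fin n) ℝ) : ℝ :=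
  sSup {μ : ℝ | ∃ v : Fin n → ℝ, v ≠ 0 ∧ A.mulVec v = μ • v}

/-- Smallest eigenvalue of a square real matrix. -/
noncomputable def lmin {n : ℕ} (A : Matrix (Fin n) (Fin n) ℝ) : ℝ :=
  sInf {μ : ℝ | ∃ v : Fin n → ℝ, v ≠ 0 ∧ A.mulVec v = μ • v}

/-- A matrix is tridiagonal if `T i j = 0` whenever `|i - j| > 1`. -/
def IsTridiagonal {k : ℕ} (T : Matrix (Fin k) (Fin k) ℝ) : Prop :=
  ∀ i j : Fin k, 1 < |(i : ℤ) - (j : ℤ)| → T i j = 0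

/-- The matrix function `f(A)` of a real symmetric matrix, defined through the
eigendecomposition `A = V Λ Vᵀ` as `V f(Λ) Vᵀ`. -/
noncomputable def matFun {n : ℕ} {A : Matrix (Fin n) (Fin n) ℝ} (hA : A.IsHermitian)
    (f : ℝ → ℝ) : Matrix (Fin n) (Fin n) ℝ :=
  (hA.eigenvectorUnitary : Matrix (Fin n) (Fin n) ℝ) * Matrix.diagonal (f ∘ hA.eigenvalues) *
    star (hA.eigenvectorUnitary : Matrix (Fin n) (Fin n) ℝ)

/-- The `i`-th Chebyshev polynomial of the first kind, shifted and stretched to the range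
`[lmin A - η, lmax A + η]`: with `r_max = lmax A + η`, `r_min = lmin A - η` and
`δ = 2 / (r_max - r_min)`, this is `y ↦ T_i (δ (y - r_min) - 1)`. -/
noncomputable def shiftedCheb {n : ℕ} (A : Matrix (Fin n) (Fin n) ℝ) (η : ℝ) (i : ℕ) :
    Polynomial ℝ :=
  (Polynomial.Chebyshev.T ℝ i).comp
    (Polynomial.C (2 / ((lmax A + η) - (lmin A - η))) *
      (Polynomial.X - Polynomial.C (lmin A - η)) - 1)

/-!
`T = Qᵀ A Q` is positive definite, and `y_k = Q T⁻¹ Qᵀ x` is the Galerkin approximation of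
`A⁻¹ x` from the range of `Q`: the error `e = A⁻¹ x - y_k` is `A`-orthogonal to that range, so
`y_k` minimises the `A`-norm of the error over it. Since `T` is tridiagonal, the residual term
`β q e_kᵀ` does not see `T^j e₁` for `j < k - 1`, so `A^j Q e₁ = Q T^j e₁` for `j < k` and
`p(A) x` lies in the range of `Q` when `deg p < k`. Hence
`λmin ‖e‖² ≤ ‖e‖_A² ≤ ‖(A⁻¹ - p(A)) x‖_A² ≤ λmax ‖(A⁻¹ - p(A)) x‖² ≤ λmax D² ‖x‖²`,
the last step by the functional calculus, as `|λ⁻¹ - p(λ)| ≤ D` on the spectrum of `A`.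
-/

open scoped MatrixOrder

section Spectrum

variable {n : Type*} [Fintype n]

theorem Matrix.dotProduct_mulVec_le_of_le {A B : Matrix n n ℝ} (h : A ≤ B) (v : n → ℝ) :
    v ⬝ᵥ (A *ᵥ v) ≤ v ⬝ᵥ (B *ᵥ v) := by
  simpa [sub_mulVec] using h.dotProduct_mulVec_nonneg v

variable [DecidableEq n]

theorem Matrix.setOf_mulVec_eq_smul_eq_spectrum {K : Type*} [Field K] (A : Matrix n n K) :
    {μ : K | ∃ v : n → K, v ≠ 0 ∧ A *ᵥ v = μ • v} = spectrum K A := by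
  ext μ
  rw [Set.mem_ofPred_eq, ← spectrum_toLin', ← Module.End.hasEigenvalue_iff_mem_spectrum]
  constructor
  · rintro ⟨v, hv, hAv⟩
    exact Module.End.hasEigenvalue_of_hasEigenvector ⟨Module.End.mem_eigenspace_iff.2 hAv, hv⟩
  · intro h
    obtain ⟨v, hv⟩ := h.exists_hasEigenvector
    exact ⟨v, hv.2, hv.apply_eq_smul⟩

theorem Matrix.dotProduct_algebraMap_mulVec (r : ℝ) (v : n → ℝ) :
    v ⬝ᵥ (algebraMap ℝ (Matrix n n ℝ) r *ᵥ v) = r * (v ⬝ᵥ v) := by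
  simp [Algebra.algebraMap_eq_smul_one, smul_mulVec]

theorem Matrix.IsHermitian.mul_dotProduct_le_of_le_spectrum {A : Matrix n n ℝ}
    (hA : A.IsHermitian) {r : ℝ} (h : ∀ μ ∈ spectrum ℝ A, r ≤ μ) (v : n → ℝ) :
    r * (v ⬝ᵥ v) ≤ v ⬝ᵥ (A *ᵥ v) := by
  simpa only [dotProduct_algebraMap_mulVec] using
    dotProduct_mulVec_le_of_le ((algebraMap_le_iff_le_spectrum hA.isSelfAdjoint).2 h) v

theorem Matrix.IsHermitian.dotProduct_le_mul_of_spectrum_le {A : Matrix n n ℝ}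
    (hA : A.IsHermitian) {r : ℝ} (h : ∀ μ ∈ spectrum ℝ A, μ ≤ r) (v : n → ℝ) :
    v ⬝ᵥ (A *ᵥ v) ≤ r * (v ⬝ᵥ v) := by
  simpa only [dotProduct_algebraMap_mulVec] using
    dotProduct_mulVec_le_of_le ((le_algebraMap_iff_spectrum_le hA.isSelfAdjoint).2 h) v

theorem Matrix.IsHermitian.cfc_mulVec_dotProduct_le {A : Matrix n n ℝ} (hA : A.IsHermitian)
    (f : ℝ → ℝ) {D : ℝ} (hf : ∀ μ ∈ spectrum ℝ A, |f μ| ≤ D) (v : n → ℝ) :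
    (cfc f A *ᵥ v) ⬝ᵥ (cfc f A *ᵥ v) ≤ D ^ 2 * (v ⬝ᵥ v) := by
  have hcont (g : ℝ → ℝ) : ContinuousOn g (spectrum ℝ A) := finite_real_spectrum.continuousOn g
  have hsq : cfc f A * cfc f A ≤ algebraMap ℝ _ (D ^ 2) := by
    rw [← cfc_mul f f A (hcont _) (hcont _)]
    refine cfc_le_algebraMap _ _ A (fun μ hμ => ?_) (hcont _)
    rw [← sq, ← sq_abs]
    exact pow_le_pow_left₀ (abs_nonneg _) (hf μ hμ) 2
  have hsymm : (cfc f A)ᵀ = cfc f A := by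
    rw [← conjTranspose_eq_transpose_of_trivial]
    exact cfc_predicate f A
  calc (cfc f A *ᵥ v) ⬝ᵥ (cfc f A *ᵥ v) = v ⬝ᵥ ((cfc f A * cfc f A) *ᵥ v) := by
        rw [← mulVec_mulVec, dotProduct_mulVec v, ← mulVec_transpose, hsymm]
    _ ≤ D ^ 2 * (v ⬝ᵥ v) := by
        simpa only [dotProduct_algebraMap_mulVec] using dotProduct_mulVec_le_of_le hsq v

theorem Matrix.PosDef.inv_sub_aeval_eq_cfc {A : Matrix n n ℝ} (hA : A.PosDef)
    (p : Polynomial ℝ) : A⁻¹ - aeval A p = cfc (fun μ => μ⁻¹ - p.eval μ) A := by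
  have hcont (g : ℝ → ℝ) : ContinuousOn g (spectrum ℝ A) := finite_real_spectrum.continuousOn g
  have hinv : cfc (fun μ : ℝ => μ⁻¹) A = A⁻¹ := by
    simpa [cfc_id ℝ A, ← nonsing_inv_eq_ringInverse] using
      cfc_inv id A (fun μ hμ => (hA.isStrictlyPositive.spectrum_pos hμ).ne') (hcont _)
  rw [cfc_sub _ _ A (hcont _) (hcont _), cfc_polynomial p A hA.isHermitian.isSelfAdjoint, hinv]

end Spectrum

section ExtremeEigenvalues

variable {n : ℕ}

theorem lmin_eq_sInf_spectrum (A : Matrix (Fin n) (Fin n) ℝ) : lmin A = sInf (spectrum ℝ A) := by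
  rw [lmin, setOf_mulVec_eq_smul_eq_spectrum]

theorem lmax_eq_sSup_spectrum (A : Matrix (Fin n) (Fin n) ℝ) : lmax A = sSup (spectrum ℝ A) := by
  rw [lmax, setOf_mulVec_eq_smul_eq_spectrum]

theorem lmin_le_of_mem_spectrum {A : Matrix (Fin n) (Fin n) ℝ} {μ : ℝ} (hμ : μ ∈ spectrum ℝ A) :
    lmin A ≤ μ :=
  lmin_eq_sInf_spectrum A ▸ csInf_le finite_real_spectrum.bddBelow hμ

theorem le_lmax_of_mem_spectrum {A : Matrix (Fin n) (Fin n) ℝ} {μ : ℝ} (hμ : μ ∈ spectrum ℝ A) :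
    μ ≤ lmax A :=
  lmax_eq_sSup_spectrum A ▸ le_csSup finite_real_spectrum.bddAbove hμ

theorem Matrix.IsHermitian.spectrum_real_nonempty [Nonempty (Fin n)]
    {A : Matrix (Fin n) (Fin n) ℝ} (hA : A.IsHermitian) : (spectrum ℝ A).Nonempty :=
  hA.spectrum_real_eq_range_eigenvalues ▸ Set.range_nonempty _

theorem Matrix.PosDef.lmin_pos [Nonempty (Fin n)] {A : Matrix (Fin n) (Fin n) ℝ}
    (hA : A.PosDef) : 0 < lmin A :=
  hA.isStrictlyPositive.spectrum_pos <| lmin_eq_sInf_spectrum A ▸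
    hA.isHermitian.spectrum_real_nonempty.csInf_mem finite_real_spectrum

theorem vecNorm_eq_sqrt_dotProduct (v : Fin n → ℝ) : vecNorm v = √(v ⬝ᵥ v) := by
  simp [vecNorm, dotProduct, sq]

theorem vecNorm_ne_zero {v : Fin n → ℝ} (hv : v ≠ 0) : vecNorm v ≠ 0 := by
  rw [vecNorm, Real.sqrt_ne_zero (by positivity)]
  simpa [← sq, dotProduct] using mt dotProduct_self_eq_zero.1 hv

theorem Matrix.PosDef.vecNorm_le_of_dotProduct_mulVec_le [Nonempty (Fin n)]
    {A : Matrix (Fin n) (Fin n) ℝ} (hA : A.PosDef) {e d x : Fin n → ℝ} {D : ℝ} (hD : 0 ≤ D)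
    (hed : e ⬝ᵥ (A *ᵥ e) ≤ d ⬝ᵥ (A *ᵥ d)) (hd : d ⬝ᵥ d ≤ D ^ 2 * (x ⬝ᵥ x)) :
    vecNorm e ≤ √(lmax A / lmin A) * D * vecNorm x := by
  have hmin := hA.lmin_pos
  obtain ⟨μ, hμ⟩ := hA.isHermitian.spectrum_real_nonempty
  have hmax : 0 ≤ lmax A :=
    hmin.le.trans ((lmin_le_of_mem_spectrum hμ).trans (le_lmax_of_mem_spectrum hμ))
  have hee : lmin A * (e ⬝ᵥ e) ≤ lmax A * (D ^ 2 * (x ⬝ᵥ x)) :=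
    calc lmin A * (e ⬝ᵥ e) ≤ e ⬝ᵥ (A *ᵥ e) :=
          hA.isHermitian.mul_dotProduct_le_of_le_spectrum (fun _ => lmin_le_of_mem_spectrum) e
      _ ≤ d ⬝ᵥ (A *ᵥ d) := hed
      _ ≤ lmax A * (d ⬝ᵥ d) :=
          hA.isHermitian.dotProduct_le_mul_of_spectrum_le (fun _ => le_lmax_of_mem_spectrum) d
      _ ≤ lmax A * (D ^ 2 * (x ⬝ᵥ x)) := mul_le_mul_of_nonneg_left hd hmax
  have hee' : e ⬝ᵥ e ≤ lmax A / lmin A * D ^ 2 * (x ⬝ᵥ x) := by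
    rw [mul_assoc, div_mul_eq_mul_div, le_div_iff₀ hmin]
    linarith
  rw [vecNorm_eq_sqrt_dotProduct, vecNorm_eq_sqrt_dotProduct, ← Real.sqrt_sq hD,
    ← Real.sqrt_mul (div_nonneg hmax hmin.le), ← Real.sqrt_mul (by positivity)]
  exact Real.sqrt_le_sqrt hee'

end ExtremeEigenvalues

section Krylov

variable {R : Type*} [CommSemiring R] {n m : Type*} [Fintype n] [DecidableEq n]
  [Fintype m] [DecidableEq m] {A : Matrix n n R} {Q : Matrix n m R} {T : Matrix m m R}

theorem Matrix.pow_mulVec_mulVec_of_mul_eq_mul_add {E : Matrix n m R} (h : A * Q = Q * T + E)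
    {v : m → R} {N : ℕ} (hE : ∀ j < N, E *ᵥ (T ^ j *ᵥ v) = 0) :
    ∀ j ≤ N, A ^ j *ᵥ (Q *ᵥ v) = Q *ᵥ (T ^ j *ᵥ v) := by
  intro j hj
  induction j with
  | zero => simp
  | succ j ih =>
    rw [pow_succ', ← mulVec_mulVec, ih (by omega), mulVec_mulVec, h, add_mulVec,
      hE j (by omega), add_zero, pow_succ', ← mulVec_mulVec, ← mulVec_mulVec]

theorem Matrix.aeval_mulVec_mulVec_of_pow {v : m → R} {N : ℕ}
    (h : ∀ j < N, A ^ j *ᵥ (Q *ᵥ v) = Q *ᵥ (T ^ j *ᵥ v)) {p : Polynomial R}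
    (hp : p.natDegree < N) : aeval A p *ᵥ (Q *ᵥ v) = Q *ᵥ (aeval T p *ᵥ v) := by
  simp only [aeval_eq_sum_range' hp, sum_mulVec, mulVec_sum, smul_mulVec, mulVec_smul]
  exact Finset.sum_congr rfl fun j hj => by rw [h j (Finset.mem_range.1 hj)]

end Krylov

theorem IsTridiagonal.pow_mulVec_single_apply_eq_zero {k : ℕ} {T : Matrix (Fin k) (Fin k) ℝ}
    (hT : IsTridiagonal T) (i₀ : Fin k) (j : ℕ) {i : Fin k} (hi : (i₀ : ℕ) + j < i) :
    (T ^ j *ᵥ Pi.single i₀ 1) i = 0 := by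
  induction j generalizing i with
  | zero =>
    rw [pow_zero, one_mulVec]
    exact Pi.single_eq_of_ne (by rintro rfl; omega) 1
  | succ j ih =>
    rw [pow_succ', ← mulVec_mulVec, mulVec, dotProduct]
    refine Finset.sum_eq_zero fun l _ => ?_
    rcases lt_or_ge ((i₀ : ℕ) + j) l with h | h
    · rw [ih h, mul_zero]
    · rw [hT i l (lt_of_lt_of_le (by omega) (le_abs_self _)), zero_mul]

theorem Matrix.transpose_fromCols_mul_fromCols_eq_one_iff {R : Type*} [CommRing R]
    {n m l : Type*} [Fintype n] [DecidableEq m] [DecidableEq l] {Q : Matrix n m R}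
    {P : Matrix n l R} :
    (fromCols Q P)ᵀ * fromCols Q P = 1 ↔
      Qᵀ * Q = 1 ∧ Qᵀ * P = 0 ∧ Pᵀ * Q = 0 ∧ Pᵀ * P = 1 := by
  rw [transpose_fromCols, fromRows_mul_fromCols, ← fromBlocks_one, fromBlocks_inj]

section Projection

variable {R : Type*} [CommRing R] {n m : Type*} [Fintype n] [Fintype m] [DecidableEq m]

theorem Matrix.transpose_mul_mul_eq_of_mul_eq_mul_add {A : Matrix n n R} {Q E : Matrix n m R}
    {T : Matrix m m R} (hQ : Qᵀ * Q = 1) (hE : Qᵀ * E = 0) (h : A * Q = Q * T + E) :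
    Qᵀ * A * Q = T := by
  rw [Matrix.mul_assoc, h, Matrix.mul_add, ← Matrix.mul_assoc, hQ, Matrix.one_mul, hE, add_zero]

theorem Matrix.transpose_mulVec_mulVec_inv_mulVec_sub_eq_zero [DecidableEq n] {A : Matrix n n R}
    {Q : Matrix n m R} {T : Matrix m m R} (hA : IsUnit A.det) (hT : IsUnit T.det)
    (hQ : Qᵀ * Q = 1) (hQAQ : Qᵀ * A * Q = T) (v : m → R) :
    Qᵀ *ᵥ (A *ᵥ (A⁻¹ *ᵥ (Q *ᵥ v) - Q *ᵥ (T⁻¹ *ᵥ v))) = 0 := by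
  rw [mulVec_sub, mulVec_mulVec, mul_nonsing_inv A hA, one_mulVec, mulVec_sub, mulVec_mulVec, hQ,
    mulVec_mulVec, mulVec_mulVec, hQAQ, mulVec_mulVec, mul_nonsing_inv T hT, sub_self]

end Projection

section Galerkin

variable {n m : Type*} [Fintype n] [Fintype m]

theorem Matrix.PosSemidef.dotProduct_mulVec_le_of_transpose_mulVec_eq_zero
    {A : Matrix n n ℝ} (hA : A.PosSemidef) {Q : Matrix n m ℝ} {e : n → ℝ}
    (he : Qᵀ *ᵥ (A *ᵥ e) = 0) (w : m → ℝ) :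
    e ⬝ᵥ (A *ᵥ e) ≤ (e + Q *ᵥ w) ⬝ᵥ (A *ᵥ (e + Q *ᵥ w)) := by
  have hAT : Aᵀ = A := by rw [← conjTranspose_eq_transpose_of_trivial]; exact hA.isHermitian
  have hcross : (Q *ᵥ w) ⬝ᵥ (A *ᵥ e) = 0 := by
    rw [dotProduct_comm, dotProduct_mulVec, ← mulVec_transpose, he, zero_dotProduct]
  have hcross' : e ⬝ᵥ (A *ᵥ (Q *ᵥ w)) = 0 := by
    rw [dotProduct_mulVec, ← mulVec_transpose, hAT, dotProduct_comm, hcross]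
  have hQw := hA.dotProduct_mulVec_nonneg (Q *ᵥ w)
  rw [star_trivial] at hQw
  simp only [mulVec_add, dotProduct_add, add_dotProduct, hcross, hcross']
  linarith

theorem Matrix.PosDef.transpose_mul_mul_same [DecidableEq m] {A : Matrix n n ℝ} (hA : A.PosDef)
    {Q : Matrix n m ℝ} (hQ : Qᵀ * Q = 1) : (Qᵀ * A * Q).PosDef := by
  rw [← conjTranspose_eq_transpose_of_trivial]
  refine hA.conjTranspose_mul_mul_same (Function.LeftInverse.injective (g := Qᵀ.mulVec) ?_)
  intro v
  rw [mulVec_mulVec, hQ, one_mulVec]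

end Galerkin

theorem Matrix.PosDef.vecNorm_inv_mulVec_sub_le {n k : ℕ} [Nonempty (Fin n)]
    {A : Matrix (Fin n) (Fin n) ℝ} (hA : A.PosDef) {Q : Matrix (Fin n) (Fin k) ℝ}
    {T : Matrix (Fin k) (Fin k) ℝ} (hQ : Qᵀ * Q = 1) (hQAQ : Qᵀ * A * Q = T) {v : Fin k → ℝ}
    {N : ℕ} (hkry : ∀ j < N, A ^ j *ᵥ (Q *ᵥ v) = Q *ᵥ (T ^ j *ᵥ v)) {p : Polynomial ℝ}
    (hp : p.natDegree < N) {D : ℝ} (hD : ∀ μ ∈ spectrum ℝ A, |μ⁻¹ - p.eval μ| ≤ D) :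
    vecNorm (A⁻¹ *ᵥ (Q *ᵥ v) - Q *ᵥ (T⁻¹ *ᵥ v)) ≤
      √(lmax A / lmin A) * D * vecNorm (Q *ᵥ v) := by
  set e := A⁻¹ *ᵥ (Q *ᵥ v) - Q *ᵥ (T⁻¹ *ᵥ v)
  have hT : IsUnit T.det := (hQAQ ▸ hA.transpose_mul_mul_same hQ).det_pos.ne'.isUnit
  have he : Qᵀ *ᵥ (A *ᵥ e) = 0 :=
    transpose_mulVec_mulVec_inv_mulVec_sub_eq_zero hA.det_pos.ne'.isUnit hT hQ hQAQ v
  have hd : (A⁻¹ - aeval A p) *ᵥ (Q *ᵥ v) = e + Q *ᵥ (T⁻¹ *ᵥ v - aeval T p *ᵥ v) := by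
    rw [sub_mulVec, aeval_mulVec_mulVec_of_pow hkry hp, mulVec_sub]
    simp only [e]
    abel
  obtain ⟨μ, hμ⟩ := hA.isHermitian.spectrum_real_nonempty
  refine hA.vecNorm_le_of_dotProduct_mulVec_le ((abs_nonneg _).trans (hD μ hμ)) ?_
    (hA.inv_sub_aeval_eq_cfc p ▸ hA.isHermitian.cfc_mulVec_dotProduct_le _ hD (Q *ᵥ v))
  rw [hd]
  exact hA.posSemidef.dotProduct_mulVec_le_of_transpose_mulVec_eq_zero he _

theorem pow_mulVec_mulVec_single_zero_of_lanczos {n k : ℕ} (hk : 0 < k)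
    {A : Matrix (Fin n) (Fin n) ℝ} {Q : Matrix (Fin n) (Fin k) ℝ} {qk1 : Fin n → ℝ} {β : ℝ}
    {T : Matrix (Fin k) (Fin k) ℝ} (hTtri : IsTridiagonal T)
    (hrel : A * Q = Q * T +
      β • Matrix.vecMulVec qk1 (Pi.single (⟨k - 1, Nat.sub_lt hk Nat.one_pos⟩ : Fin k) 1)) :
    ∀ j < k, A ^ j *ᵥ (Q *ᵥ Pi.single ⟨0, hk⟩ 1) = Q *ᵥ (T ^ j *ᵥ Pi.single ⟨0, hk⟩ 1) := by
  refine fun j hj => pow_mulVec_mulVec_of_mul_eq_mul_add hrel (N := k - 1) (fun i hi => ?_) j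
    (by omega)
  rw [smul_mulVec, vecMulVec_mulVec, single_dotProduct,
    hTtri.pow_mulVec_single_apply_eq_zero _ i (by dsimp only; omega)]
  simp

theorem lanczos_exact_linear_system_approximation_general
    {n k : ℕ} (hk : 0 < k)
    (A : Matrix (Fin n) (Fin n) ℝ) (Q : Matrix (Fin n) (Fin k) ℝ)
    (qk1 : Fin n → ℝ) (β : ℝ) (T : Matrix (Fin k) (Fin k) ℝ)
    (hA : A.PosDef) (hTtri : IsTridiagonal T)
    (hrel : A * Q = Q * T +
      β • Matrix.vecMulVec qk1 (Pi.single (⟨k - 1, Nat.sub_lt hk Nat.one_pos⟩ : Fin k) 1))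
    (horth : (Matrix.fromCols Q (Matrix.replicateCol (Fin 1) qk1))ᵀ *
      Matrix.fromCols Q (Matrix.replicateCol (Fin 1) qk1) = 1)
    (x : Fin n → ℝ)
    (hq1 : Q.mulVec (Pi.single (⟨0, hk⟩ : Fin k) 1) = (vecNorm x)⁻¹ • x) :
    IsUnit T.det ∧
      ∀ (p : Polynomial ℝ), p.natDegree < k → ∀ D : ℝ,
        (∀ μ : ℝ, (∃ v : Fin n → ℝ, v ≠ 0 ∧ A.mulVec v = μ • v) → |p.eval μ - 1 / μ| ≤ D) →
        vecNorm (A⁻¹.mulVec x -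
            vecNorm x • Q.mulVec (T⁻¹.mulVec (Pi.single (⟨0, hk⟩ : Fin k) 1))) ≤
          Real.sqrt (lmax A / lmin A) * D * vecNorm x := by
  obtain ⟨hQQ, hQq, -, -⟩ := transpose_fromCols_mul_fromCols_eq_one_iff.1 horth
  have hQAQ : Qᵀ * A * Q = T := by
    refine transpose_mul_mul_eq_of_mul_eq_mul_add hQQ ?_ hrel
    rw [Matrix.mul_smul, vecMulVec_eq (Fin 1), ← Matrix.mul_assoc, hQq, Matrix.zero_mul, smul_zero]
  refine ⟨(hQAQ ▸ hA.transpose_mul_mul_same hQQ).det_pos.ne'.isUnit, fun p hp D hD => ?_⟩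
  rcases eq_or_ne x 0 with rfl | hx
  · simp [vecNorm]
  obtain ⟨i, -⟩ := Function.ne_iff.1 hx
  have : Nonempty (Fin n) := ⟨i⟩
  set v : Fin k → ℝ := vecNorm x • Pi.single ⟨0, hk⟩ 1
  have hQv : Q *ᵥ v = x := by
    rw [mulVec_smul, hq1, smul_inv_smul₀ (vecNorm_ne_zero hx)]
  have hyk : vecNorm x • Q *ᵥ (T⁻¹ *ᵥ Pi.single ⟨0, hk⟩ 1) = Q *ᵥ (T⁻¹ *ᵥ v) := by
    rw [mulVec_smul, mulVec_smul]
  have hkry : ∀ j < k, A ^ j *ᵥ (Q *ᵥ v) = Q *ᵥ (T ^ j *ᵥ v) := fun j hj => by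
    simp only [v, mulVec_smul, pow_mulVec_mulVec_single_zero_of_lanczos hk hTtri hrel j hj]
  have hspec : ∀ μ ∈ spectrum ℝ A, |μ⁻¹ - p.eval μ| ≤ D := fun μ hμ => by
    rw [abs_sub_comm, ← one_div]
    exact hD μ ((setOf_mulVec_eq_smul_eq_spectrum A).superset hμ)
  simpa only [hQv, hyk] using hA.vecNorm_inv_mulVec_sub_le hQQ hQAQ hkry hp hspec

/-- Exact-arithmetic guarantee for Lanczos applied to a positive definite linear
system: `T` is invertible and, with `y_k = ‖x‖·Q·T⁻¹·e₁`, for any polynomial `p` of degree `< k`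
with `|p(λ) - 1/λ| ≤ D` at every eigenvalue `λ` of `A`,
`‖A⁻¹x - y_k‖ ≤ √(λmax(A)/λmin(A)) · D · ‖x‖`. -/
theorem lanczos_exact_linear_system_approximation
    {n k : ℕ} (hk : 0 < k)
    (A : Matrix (Fin n) (Fin n) ℝ) (Q : Matrix (Fin n) (Fin k) ℝ)
    (qk1 : Fin n → ℝ) (β : ℝ) (T : Matrix (Fin k) (Fin k) ℝ)
    (hA : A.PosDef) (hT : T.IsHermitian) (hTtri : IsTridiagonal T)
    (hrel : A * Q = Q * T +
      β • Matrix.vecMulVec qk1 (Pi.single (⟨k - 1, Nat.sub_lt hk Nat.one_pos⟩ : Fin k) 1))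
    (horth : (Matrix.fromCols Q (Matrix.replicateCol (Fin 1) qk1))ᵀ *
      Matrix.fromCols Q (Matrix.replicateCol (Fin 1) qk1) = 1)
    (x : Fin n → ℝ) (hx : x ≠ 0)
    (hq1 : Q.mulVec (Pi.single (⟨0, hk⟩ : Fin k) 1) = (vecNorm x)⁻¹ • x) :
    IsUnit T.det ∧
      ∀ (p : Polynomial ℝ), p.natDegree < k → ∀ D : ℝ,
        (∀ μ : ℝ, (∃ v : Fin n → ℝ, v ≠ 0 ∧ A.mulVec v = μ • v) → |p.eval μ - 1 / μ| ≤ D) →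
        vecNorm (A⁻¹.mulVec x -
            vecNorm x • Q.mulVec (T⁻¹.mulVec (Pi.single (⟨0, hk⟩ : Fin k) 1))) ≤
          Real.sqrt (lmax A / lmin A) * D * vecNorm x :=
  lanczos_exact_linear_system_approximation_general hk A Q qk1 β T hA hTtri hrel horth x hq1
end

section
/- Let A be an n×n real symmetric matrix, Q an n×k real matrix, q_{k+1} ∈ ℝⁿ, β_{k+1} ∈ ℝ, E an n×k real matrix, and T a k×k real symmetric tridiagonal matrix such that A·Q = Q·T + β_{k+1}·q_{k+1}·e_kᵀ + E. Let η > 0 and suppose every eigenvalue of T lies in [λmin(A) − η, λmax(A) + η]. Set q₁ = Q·e₁. Then for every natural number i with i < k, ‖Q·T̄_i(T)·e₁ − T̄_i(A)·q₁‖ ≤ (2i²/η)·‖E‖. -/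
open Matrix Polynomial Set

/-!
With `ℓ(y) = δ (y - r_min) - 1` we have `T̄_j = T_j ∘ ℓ`, and `ℓ` maps the spectra of `A` and `T`
into `[-1, 1]`. The errors `d_j = Q T̄_j(T) e₁ - T̄_j(A) q₁` obey the Chebyshev recurrence
`d_{j+2} = 2 ℓ(A) d_{j+1} - d_j + r_{j+1}`, `d_1 = r_0`, with residuals
`r_j = c_j (Q ℓ(T) - ℓ(A) Q) T̄_j(T) e₁`, where `c_0 = 1` and `c_j = 2` otherwise.
The perturbed Lanczos relation turns `Q ℓ(T) - ℓ(A) Q` into `-δ E` on vectors with vanishing last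
entry, and `T̄_j(T) e₁` is such a vector for `j < k - 1` because `T` is tridiagonal. Solving the
recurrence, `d_i = ∑_{t < i} U_{i-1-t}(ℓ(A)) r_t`; since `|U_m| ≤ m + 1` and `|T_j| ≤ 1` on
`[-1, 1]`, each of the `i` terms is at most `i · 2δ ‖E‖`, and `δ ≤ 1 / η`.
-/

open scoped Matrix.Norms.L2Operator

section Norms
variable {m n : ℕ}

lemma vecNorm_eq_norm (v : Fin n → ℝ) : vecNorm v = ‖WithLp.toLp 2 v‖ := by
  simp [vecNorm, EuclideanSpace.norm_eq, sq_abs]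

lemma vecNorm_smul (c : ℝ) (v : Fin n → ℝ) : vecNorm (c • v) = |c| * vecNorm v := by
  simp [vecNorm_eq_norm, WithLp.toLp_smul, norm_smul]

lemma vecNorm_sum_le {ι : Type*} (s : Finset ι) (f : ι → Fin n → ℝ) :
    vecNorm (∑ i ∈ s, f i) ≤ ∑ i ∈ s, vecNorm (f i) := by
  simpa [vecNorm_eq_norm, WithLp.toLp_sum] using norm_sum_le s (fun i => WithLp.toLp 2 (f i))

lemma vecNorm_single_one (j : Fin n) : vecNorm (Pi.single j 1) = 1 := by
  simp [vecNorm_eq_norm]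

lemma vecNorm_mulVec_le (M : Matrix (Fin m) (Fin n) ℝ) (v : Fin n → ℝ) :
    vecNorm (M *ᵥ v) ≤ ‖M‖ * vecNorm v := by
  simpa [vecNorm_eq_norm] using M.l2_opNorm_mulVec (WithLp.toLp 2 v)

lemma matNorm_eq_l2_opNorm (M : Matrix (Fin m) (Fin n) ℝ) : matNorm M = ‖M‖ := by
  rw [Matrix.l2_opNorm_def, ← ContinuousLinearMap.sSup_unitClosedBall_eq_norm]
  unfold matNorm
  congr 1
  ext c
  simp only [vecNorm_eq_norm, Set.mem_ofPred_eq, Set.mem_image, Metric.mem_closedBall,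
    dist_zero_right, eq_comm (a := c)]
  exact ⟨fun ⟨v, hv, hc⟩ => ⟨WithLp.toLp 2 v, hv, hc⟩, fun ⟨x, hx, hc⟩ => ⟨x.ofLp, hx, hc⟩⟩

end Norms

section Spectral
variable {ι 𝕜 : Type*} [Fintype ι] [DecidableEq ι] [RCLike 𝕜] {M : Matrix ι ι 𝕜}

lemma Matrix.IsHermitian.aeval_eq (hM : M.IsHermitian) (p : ℝ[X]) :
    aeval M p = (hM.eigenvectorUnitary : Matrix ι ι 𝕜) *
      diagonal (RCLike.ofReal ∘ p.eval ∘ hM.eigenvalues) *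
        star (hM.eigenvectorUnitary : Matrix ι ι 𝕜) := by
  rw [← cfc_polynomial p M hM.isSelfAdjoint, hM.cfc_eq]
  rfl

lemma Matrix.IsHermitian.norm_aeval_le (hM : M.IsHermitian) (p : ℝ[X]) {c : ℝ} (hc : 0 ≤ c)
    (hp : ∀ j, |p.eval (hM.eigenvalues j)| ≤ c) : ‖aeval M p‖ ≤ c := by
  have hU := hM.eigenvectorUnitary.2
  rw [hM.aeval_eq, CStarRing.norm_mul_mem_unitary _ (Unitary.star_mem hU),
    CStarRing.norm_mem_unitary_mul _ hU, l2_opNorm_diagonal, pi_norm_le_iff_of_nonneg hc]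
  intro j
  simpa using hp j

end Spectral

section Eigenvalues
variable {n : ℕ} {M : Matrix (Fin n) (Fin n) ℝ}

lemma abs_le_l2_opNorm_of_mulVec_eq_smul {μ : ℝ} {v : Fin n → ℝ} (hv : v ≠ 0)
    (hμ : M *ᵥ v = μ • v) : |μ| ≤ ‖M‖ := by
  have h := vecNorm_mulVec_le M v
  rw [hμ, vecNorm_smul] at h
  have hpos : 0 < vecNorm v := by
    rw [vecNorm_eq_norm, norm_pos_iff]
    exact fun h0 => hv (congrArg WithLp.ofLp h0)
  exact le_of_mul_le_mul_right h hpos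

lemma Matrix.IsHermitian.exists_mulVec_eq_eigenvalues_smul (hM : M.IsHermitian) (j : Fin n) :
    ∃ v ≠ 0, M *ᵥ v = hM.eigenvalues j • v :=
  ⟨_, fun h0 => hM.eigenvectorBasis.orthonormal.ne_zero j (congrArg (WithLp.toLp 2) h0),
    hM.mulVec_eigenvectorBasis j⟩

lemma Matrix.IsHermitian.eigenvalues_mem_Icc (hM : M.IsHermitian) (j : Fin n) :
    hM.eigenvalues j ∈ Icc (lmin M) (lmax M) := by
  obtain ⟨v, hv, hμ⟩ := hM.exists_mulVec_eq_eigenvalues_smul j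
  have hbound : ∀ μ ∈ {μ : ℝ | ∃ v : Fin n → ℝ, v ≠ 0 ∧ M *ᵥ v = μ • v}, |μ| ≤ ‖M‖ :=
    fun μ ⟨v, hv, hμ⟩ => abs_le_l2_opNorm_of_mulVec_eq_smul hv hμ
  exact ⟨csInf_le ⟨-‖M‖, fun μ hμ => neg_le_of_abs_le (hbound μ hμ)⟩ ⟨v, hv, hμ⟩,
    le_csSup ⟨‖M‖, fun μ hμ => le_of_abs_le (hbound μ hμ)⟩ ⟨v, hv, hμ⟩⟩

lemma Matrix.IsHermitian.lmin_le_lmax (hM : M.IsHermitian) : lmin M ≤ lmax M := by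
  rcases n.eq_zero_or_pos with rfl | hn
  · simp [lmin, lmax]
  · exact (hM.eigenvalues_mem_Icc ⟨0, hn⟩).1.trans (hM.eigenvalues_mem_Icc ⟨0, hn⟩).2

end Eigenvalues

lemma Polynomial.Chebyshev.abs_eval_U_real_le (m : ℕ) {x : ℝ} (hx : |x| ≤ 1) :
    |(U ℝ m).eval x| ≤ m + 1 := by
  induction m with
  | zero => simp
  | succ m ih =>
    rw [Nat.cast_succ, U_eq_X_mul_U_add_T, eval_add, eval_mul, eval_X]
    calc |x * (U ℝ m).eval x + (T ℝ (m + 1)).eval x|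
        ≤ |x| * |(U ℝ m).eval x| + |(T ℝ (m + 1)).eval x| := by
          rw [← abs_mul]; exact abs_add_le _ _
      _ ≤ 1 * (m + 1) + 1 := by
          gcongr
          exact abs_eval_T_real_le_one _ hx
      _ = ((m + 1 : ℕ) : ℝ) + 1 := by push_cast; ring

lemma Polynomial.Chebyshev.natDegree_T_comp_le {R : Type*} [CommRing R] [IsDomain R]
    [NeZero (2 : R)] {ℓ : R[X]} (hℓ : ℓ.natDegree ≤ 1) (j : ℕ) :
    ((T R j).comp ℓ).natDegree ≤ j :=
  calc ((T R j).comp ℓ).natDegree ≤ (T R j).natDegree * ℓ.natDegree := natDegree_comp_le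
    _ ≤ j * 1 := by rw [natDegree_T]; exact Nat.mul_le_mul (by simp) hℓ
    _ = j := mul_one j

section Tridiagonal
variable {k : ℕ} {T : Matrix (Fin k) (Fin k) ℝ}

lemma IsTridiagonal.pow_apply_eq_zero (hT : IsTridiagonal T) (N : ℕ) {r c : Fin k}
    (hrc : (N : ℤ) < |(r : ℤ) - c|) : (T ^ N) r c = 0 := by
  induction N generalizing r with
  | zero =>
    rw [pow_zero, Matrix.one_apply_ne]
    rintro rfl
    simp at hrc
  | succ N ih =>
    rw [pow_succ', Matrix.mul_apply]
    refine Finset.sum_eq_zero fun j _ => ?_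
    by_cases hrj : 1 < |(r : ℤ) - j|
    · rw [hT r j hrj, zero_mul]
    · have htri : |(r : ℤ) - c| ≤ |(r : ℤ) - j| + |(j : ℤ) - c| := abs_sub_le _ _ _
      rw [ih (by push_cast at hrc; linarith), mul_zero]

lemma IsTridiagonal.aeval_apply_eq_zero (hT : IsTridiagonal T) {p : ℝ[X]} {r c : Fin k}
    (hp : (p.natDegree : ℤ) < |(r : ℤ) - c|) : aeval T p r c = 0 := by
  rw [aeval_eq_sum_range, Matrix.sum_apply]
  refine Finset.sum_eq_zero fun N hN => ?_
  have hN : N ≤ p.natDegree := Nat.lt_succ_iff.mp (Finset.mem_range.mp hN)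
  rw [Matrix.smul_apply, hT.pow_apply_eq_zero N (by omega), smul_zero]

lemma IsTridiagonal.aeval_mulVec_single_apply_eq_zero (hT : IsTridiagonal T) {p : ℝ[X]}
    {r c : Fin k} (hp : (p.natDegree : ℤ) < |(r : ℤ) - c|) :
    (aeval T p *ᵥ Pi.single c 1) r = 0 := by
  simpa [mulVec_single_one] using hT.aeval_apply_eq_zero hp

end Tridiagonal

section ChebyshevRecurrence
variable {R ι m k : Type*} [CommRing R] [Fintype ι] [DecidableEq ι] [Fintype m] [DecidableEq m]
  [Fintype k] [DecidableEq k]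

/-- Variation of constants for the Chebyshev recurrence: `U_m(B)` is its fundamental solution. -/
theorem eq_sum_aeval_U_mulVec (B : Matrix ι ι R) {d r : ℕ → ι → R} (h0 : d 0 = 0)
    (h1 : d 1 = r 0) (hrec : ∀ j, d (j + 2) = 2 • (B *ᵥ d (j + 1)) - d j + r (j + 1)) (j : ℕ) :
    d j = ∑ t ∈ Finset.range j, aeval B (Chebyshev.U R ((j : ℤ) - 1 - t)) *ᵥ r t := by
  set S : ℕ → ι → R :=
    fun j => ∑ t ∈ Finset.range j, aeval B (Chebyshev.U R ((j : ℤ) - 1 - t)) *ᵥ r t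
  have hS : ∀ j, S (j + 2) = 2 • (B *ᵥ S (j + 1)) - S j + r (j + 1) := by
    intro j
    have hU : ∀ t : ℕ, Chebyshev.U R ((j + 2 : ℕ) - 1 - t : ℤ) =
        2 * X * Chebyshev.U R ((j + 1 : ℕ) - 1 - t : ℤ) - Chebyshev.U R ((j : ℕ) - 1 - t : ℤ) := by
      intro t
      rw [show ((j + 2 : ℕ) : ℤ) - 1 - t = (j - t : ℤ) + 1 by push_cast; ring,
        show ((j + 1 : ℕ) : ℤ) - 1 - t = (j - t : ℤ) by push_cast; ring,
        show (j : ℤ) - 1 - t = (j - t : ℤ) - 1 by ring, Chebyshev.U_add_one]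
    have hSj : S j =
        ∑ t ∈ Finset.range (j + 1), aeval B (Chebyshev.U R ((j : ℤ) - 1 - t)) *ᵥ r t := by
      rw [Finset.sum_range_succ, show (j : ℤ) - 1 - j = -1 by ring, Chebyshev.U_neg_one, map_zero,
        zero_mulVec, add_zero]
    rw [hSj]
    simp only [S]
    rw [Finset.sum_range_succ _ (j + 1),
      show ((j + 2 : ℕ) : ℤ) - 1 - (j + 1 : ℕ) = 0 by push_cast; ring, Chebyshev.U_zero, map_one,
      one_mulVec]
    simp only [hU, map_sub, map_mul, map_ofNat, aeval_X, sub_mulVec, Finset.sum_sub_distrib,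
      mulVec_sum, ← mulVec_mulVec, ofNat_mulVec, Finset.smul_sum, ofNat_smul_eq_nsmul]
  suffices ∀ j, d j = S j ∧ d (j + 1) = S (j + 1) from (this j).1
  intro j
  induction j with
  | zero => exact ⟨by simp [S, h0], by simp [S, h1]⟩
  | succ j ih => exact ⟨ih.2, by rw [hrec, hS, ih.1, ih.2]⟩

lemma mul_aeval_sub_aeval_mul_of_natDegree_le_one {A : Matrix m m R} {Q F : Matrix m k R}
    {T : Matrix k k R} (hrel : A * Q = Q * T + F) {ℓ : R[X]} (hℓ : ℓ.natDegree ≤ 1) :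
    Q * aeval T ℓ - aeval A ℓ * Q = -(ℓ.coeff 1 • F) := by
  conv_lhs => rw [eq_X_add_C_of_natDegree_le_one hℓ]
  simp only [map_add, map_mul, aeval_C, aeval_X, Algebra.algebraMap_eq_smul_one, Matrix.mul_add,
    Matrix.add_mul, Matrix.mul_smul, Matrix.smul_mul, Matrix.mul_one, Matrix.one_mul, hrel]
  module

theorem mulVec_aeval_T_comp_sub_aeval_mulVec_eq_sum (A : Matrix m m R) (T : Matrix k k R)
    (Q : Matrix m k R) (ℓ : R[X]) (v : k → R) (j : ℕ) :
    Q *ᵥ (aeval T ((Chebyshev.T R j).comp ℓ) *ᵥ v) -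
        aeval A ((Chebyshev.T R j).comp ℓ) *ᵥ (Q *ᵥ v) =
      ∑ t ∈ Finset.range j, aeval A ((Chebyshev.U R ((j : ℤ) - 1 - t)).comp ℓ) *ᵥ
        ((if t = 0 then 1 else 2 : R) •
          (Q * aeval T ℓ - aeval A ℓ * Q) *ᵥ (aeval T ((Chebyshev.T R t).comp ℓ) *ᵥ v)) := by
  simp only [aeval_comp]
  refine eq_sum_aeval_U_mulVec (aeval A ℓ) (d := fun j => Q *ᵥ (aeval (aeval T ℓ)
    (Chebyshev.T R j) *ᵥ v) - aeval (aeval A ℓ) (Chebyshev.T R j) *ᵥ (Q *ᵥ v)) ?_ ?_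
    (fun j => ?_) j
  · simp
  · simp [sub_mulVec, mulVec_mulVec]
  · have hT : Chebyshev.T R ((j + 2 : ℕ) : ℤ) =
        2 * X * Chebyshev.T R ((j + 1 : ℕ) : ℤ) - Chebyshev.T R (j : ℤ) := by
      push_cast; exact Chebyshev.T_add_two R j
    simp only [hT, map_sub, map_mul, map_ofNat, aeval_X, sub_mulVec, mulVec_sub, ofNat_mulVec,
      ← mulVec_mulVec, mulVec_smul, Nat.add_one_ne_zero, if_false]
    module

end ChebyshevRecurrence

section Lanczos
variable {n k : ℕ} {A : Matrix (Fin n) (Fin n) ℝ} {Q E : Matrix (Fin n) (Fin k) ℝ}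
  {T : Matrix (Fin k) (Fin k) ℝ} {qk1 : Fin n → ℝ} {β : ℝ} {ℓ : ℝ[X]}

lemma lanczos_mul_aeval_sub_aeval_mul_mulVec (hk : 0 < k)
    (hrel : A * Q = Q * T + β • vecMulVec qk1 (Pi.single ⟨k - 1, by omega⟩ 1) + E)
    (hℓ : ℓ.natDegree ≤ 1) {x : Fin k → ℝ} (hx : x ⟨k - 1, by omega⟩ = 0) :
    (Q * aeval T ℓ - aeval A ℓ * Q) *ᵥ x = -(ℓ.coeff 1 • E *ᵥ x) := by
  rw [add_assoc] at hrel
  rw [mul_aeval_sub_aeval_mul_of_natDegree_le_one hrel hℓ]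
  simp [add_mulVec, neg_mulVec, smul_mulVec, vecMulVec_mulVec, single_dotProduct, hx]

theorem vecNorm_lanczos_chebyshev_error_le (hk : 0 < k) (hA : A.IsHermitian)
    (hT : T.IsHermitian) (hTtri : IsTridiagonal T)
    (hrel : A * Q = Q * T + β • vecMulVec qk1 (Pi.single ⟨k - 1, by omega⟩ 1) + E)
    (hℓ : ℓ.natDegree ≤ 1) (hℓA : ∀ j, |ℓ.eval (hA.eigenvalues j)| ≤ 1)
    (hℓT : ∀ j, |ℓ.eval (hT.eigenvalues j)| ≤ 1) {i : ℕ} (hi : i < k) :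
    vecNorm (Q *ᵥ (aeval T ((Chebyshev.T ℝ i).comp ℓ) *ᵥ Pi.single ⟨0, hk⟩ 1) -
        aeval A ((Chebyshev.T ℝ i).comp ℓ) *ᵥ (Q *ᵥ Pi.single ⟨0, hk⟩ 1)) ≤
      2 * i ^ 2 * |ℓ.coeff 1| * ‖E‖ := by
  have hterm : ∀ t ∈ Finset.range i,
      vecNorm (aeval A ((Chebyshev.U ℝ ((i : ℤ) - 1 - t)).comp ℓ) *ᵥ
        ((if t = 0 then 1 else 2 : ℝ) • (Q * aeval T ℓ - aeval A ℓ * Q) *ᵥ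
          (aeval T ((Chebyshev.T ℝ t).comp ℓ) *ᵥ Pi.single ⟨0, hk⟩ 1))) ≤
        i * (2 * (|ℓ.coeff 1| * ‖E‖)) := by
    intro t ht
    have ht : t < i := Finset.mem_range.mp ht
    set x := aeval T ((Chebyshev.T ℝ t).comp ℓ) *ᵥ Pi.single ⟨0, hk⟩ 1
    have hx_last : x ⟨k - 1, by omega⟩ = 0 := by
      refine hTtri.aeval_mulVec_single_apply_eq_zero ?_
      have := Chebyshev.natDegree_T_comp_le hℓ t
      simp only [abs_of_nonneg (by omega : (0 : ℤ) ≤ ((k - 1 : ℕ) : ℤ) - (0 : ℕ))]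
      omega
    have hx : vecNorm x ≤ 1 := by
      refine (vecNorm_mulVec_le _ _).trans ?_
      rw [vecNorm_single_one, mul_one]
      exact hT.norm_aeval_le _ zero_le_one fun j => by
        simpa using Chebyshev.abs_eval_T_real_le_one t (hℓT j)
    have hEx : vecNorm (E *ᵥ x) ≤ ‖E‖ :=
      (vecNorm_mulVec_le E x).trans (mul_le_of_le_one_right (norm_nonneg E) hx)
    have hU : ‖aeval A ((Chebyshev.U ℝ ((i : ℤ) - 1 - t)).comp ℓ)‖ ≤ i := by
      rw [show (i : ℤ) - 1 - t = ((i - 1 - t : ℕ) : ℤ) by omega]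
      refine (hA.norm_aeval_le (c := ((i - 1 - t : ℕ) : ℝ) + 1) _ (by positivity)
        fun j => by simpa using Chebyshev.abs_eval_U_real_le (i - 1 - t) (hℓA j)).trans ?_
      exact_mod_cast (by omega : i - 1 - t + 1 ≤ i)
    have hc : |(if t = 0 then 1 else 2 : ℝ)| ≤ 2 := by split_ifs <;> norm_num
    rw [lanczos_mul_aeval_sub_aeval_mul_mulVec hk hrel hℓ hx_last, ← neg_smul]
    refine (vecNorm_mulVec_le _ _).trans ?_
    rw [vecNorm_smul, vecNorm_smul, abs_neg]
    rw [vecNorm_eq_norm] at hEx ⊢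
    gcongr
  calc _ ≤ ∑ t ∈ Finset.range i, (i : ℝ) * (2 * (|ℓ.coeff 1| * ‖E‖)) := by
        rw [mulVec_aeval_T_comp_sub_aeval_mulVec_eq_sum]
        exact (vecNorm_sum_le _ _).trans (Finset.sum_le_sum hterm)
    _ = 2 * i ^ 2 * |ℓ.coeff 1| * ‖E‖ := by simp; ring

end Lanczos

section AffineRescaling
variable {a b : ℝ}

lemma natDegree_rescale_le : (C (2 / (b - a)) * (X - C a) - 1).natDegree ≤ 1 := by
  compute_degree

lemma coeff_one_rescale : (C (2 / (b - a)) * (X - C a) - 1).coeff 1 = 2 / (b - a) := by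
  simp [coeff_one]

lemma abs_eval_rescale_le_one (hab : a < b) {x : ℝ} (hx : x ∈ Icc a b) :
    |(C (2 / (b - a)) * (X - C a) - 1).eval x| ≤ 1 := by
  have hba : 0 < b - a := sub_pos.mpr hab
  rw [eval_sub, eval_mul, eval_C, eval_sub, eval_X, eval_C, eval_one, abs_le, div_mul_eq_mul_div,
    le_sub_iff_add_le, sub_le_iff_le_add, le_div_iff₀ hba, div_le_iff₀ hba]
  constructor <;> nlinarith [hx.1, hx.2]

end AffineRescaling
/-- Finite-precision Lanczos applies shifted Chebyshev polynomials stably: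
with perturbed Lanczos relation `A Q = Q T + β q_{k+1} e_kᵀ + E` and all eigenvalues of `T`
in `[λmin(A) - η, λmax(A) + η]`, for all `i < k`,
`‖Q·T̄_i(T)·e₁ - T̄_i(A)·q₁‖ ≤ (2 i² / η)·‖E‖`. -/
theorem lanczos_applies_chebyshev_stably
    {n k : ℕ} (hk : 0 < k)
    (A : Matrix (Fin n) (Fin n) ℝ) (Q : Matrix (Fin n) (Fin k) ℝ)
    (qk1 : Fin n → ℝ) (β : ℝ) (E : Matrix (Fin n) (Fin k) ℝ) (T : Matrix (Fin k) (Fin k) ℝ)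
    (hA : A.IsHermitian) (hT : T.IsHermitian) (hTtri : IsTridiagonal T)
    (hrel : A * Q = Q * T +
      β • Matrix.vecMulVec qk1 (Pi.single (⟨k - 1, Nat.sub_lt hk Nat.one_pos⟩ : Fin k) 1) + E)
    (η : ℝ) (hη : 0 < η)
    (hTeig : ∀ (μ : ℝ) (v : Fin k → ℝ), v ≠ 0 → T.mulVec v = μ • v →
      μ ∈ Set.Icc (lmin A - η) (lmax A + η)) :
    ∀ i : ℕ, i < k →
      vecNorm (Q.mulVec ((Polynomial.aeval T (shiftedCheb A η i)).mulVec
            (Pi.single (⟨0, hk⟩ : Fin k) 1)) -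
          (Polynomial.aeval A (shiftedCheb A η i)).mulVec
            (Q.mulVec (Pi.single (⟨0, hk⟩ : Fin k) 1))) ≤
        2 * (i : ℝ) ^ 2 / η * matNorm E := by
  intro i hi
  have hspread := hA.lmin_le_lmax
  have hab : lmin A - η < lmax A + η := by linarith
  have hA_mem (j : Fin n) : hA.eigenvalues j ∈ Icc (lmin A - η) (lmax A + η) := by
    have := hA.eigenvalues_mem_Icc j
    exact ⟨by linarith [this.1], by linarith [this.2]⟩
  have hT_mem (j : Fin k) : hT.eigenvalues j ∈ Icc (lmin A - η) (lmax A + η) := by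
    obtain ⟨v, hv, hμ⟩ := hT.exists_mulVec_eq_eigenvalues_smul j
    exact hTeig _ v hv hμ
  have hδ : |2 / (lmax A + η - (lmin A - η))| ≤ 1 / η := by
    rw [abs_of_pos (div_pos two_pos (by linarith)), div_le_div_iff₀ (by linarith) hη]
    linarith
  have h := vecNorm_lanczos_chebyshev_error_le hk hA hT hTtri hrel natDegree_rescale_le
    (fun j => abs_eval_rescale_le_one hab (hA_mem j))
    (fun j => abs_eval_rescale_le_one hab (hT_mem j)) hi
  rw [coeff_one_rescale] at h
  rw [matNorm_eq_l2_opNorm]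
  refine h.trans ?_
  calc _ ≤ 2 * (i : ℝ) ^ 2 * (1 / η) * ‖E‖ := by gcongr
    _ = _ := by ring
end

section
/- Let B be a nonzero m×n real matrix with n ≥ 1, let Δ be real with 0 < Δ ≤ 1/2, and let q be a natural number with q ≥ (4/Δ)·ln(n/Δ). If z is drawn uniformly at random from {−1, 1}ⁿ, then with probability at least 1/2 the vector ŷ = (BᵀB)^q·z satisfies both ‖ŷ‖ ≥ λmax(BᵀB)^q/n and ‖B·ŷ‖ ≥ (1 − Δ/2)·‖B‖·‖ŷ‖. -/
open Matrix Polynomial Set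

/-!
Let `A = BᵀB` have orthonormal eigenvectors `uᵢ` with eigenvalues `λᵢ ≥ 0`, the top one `λ₀ = λmax =
‖B‖²`, and write `cᵢ = ⟨uᵢ, z⟩`, so that `∑ cᵢ² = ‖z‖² = n` and `ŷ` has coordinates `λᵢ^q cᵢ`.
Whenever `c₀² ≥ 1/n`, the first bound is `‖ŷ‖ ≥ λ₀^q |c₀|`, and for the second every eigenvalue
below `(1 - Δ/2)² λ₀` is damped by `(1 - Δ/2)^(4q) ≤ (Δ/n)^8`, too little weight to pull the
Rayleigh quotient `‖Bŷ‖²/‖ŷ‖²` below `(1 - Δ/2)² λ₀`.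
Half of all sign vectors have `c₀² ≥ 1/n`: if `u₀ⱼ` is the largest entry of `u₀` in absolute value,
then `u₀ⱼ² ≥ 1/n`, and flipping `zⱼ` moves `⟨u₀, z⟩` by `2|u₀ⱼ|`, so of `z` and its flip at `j` at
least one has `|⟨u₀, z⟩| ≥ |u₀ⱼ|`.
-/

open Finset

namespace Matrix.IsHermitian

variable {ι : Type*} [Fintype ι] [DecidableEq ι] {A : Matrix ι ι ℝ} (hA : A.IsHermitian)

noncomputable def eigenCoord (v : ι → ℝ) (i : ι) : ℝ :=
  hA.eigenvectorBasis.repr (WithLp.toLp 2 v) i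

lemma eigenCoord_eq_dotProduct (v : ι → ℝ) (i : ι) :
    hA.eigenCoord v i = v ⬝ᵥ (hA.eigenvectorBasis i).ofLp := by
  simp [eigenCoord, OrthonormalBasis.repr_apply_apply, PiLp.inner_apply, dotProduct]

lemma dotProduct_eq_sum_eigenCoord_mul (v w : ι → ℝ) :
    v ⬝ᵥ w = ∑ i, hA.eigenCoord v i * hA.eigenCoord w i := by
  have h := hA.eigenvectorBasis.repr.inner_map_map (WithLp.toLp 2 v) (WithLp.toLp 2 w)
  rw [PiLp.inner_apply, PiLp.inner_apply] at h
  simpa [eigenCoord, dotProduct, mul_comm] using h.symm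

lemma sum_eigenCoord_sq (v : ι → ℝ) : ∑ i, hA.eigenCoord v i ^ 2 = ∑ i, v i ^ 2 := by
  simpa [sq, dotProduct] using (hA.dotProduct_eq_sum_eigenCoord_mul v v).symm

lemma eigenCoord_mulVec (v : ι → ℝ) (i : ι) :
    hA.eigenCoord (A *ᵥ v) i = hA.eigenvalues i * hA.eigenCoord v i := by
  rw [eigenCoord_eq_dotProduct, eigenCoord_eq_dotProduct, dotProduct_comm, dotProduct_mulVec,
    ← mulVec_transpose, ← conjTranspose_eq_transpose_of_trivial, hA.eq,
    hA.mulVec_eigenvectorBasis, dotProduct_comm, dotProduct_smul, smul_eq_mul]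

lemma eigenCoord_pow_mulVec (q : ℕ) (v : ι → ℝ) (i : ι) :
    hA.eigenCoord ((A ^ q) *ᵥ v) i = hA.eigenvalues i ^ q * hA.eigenCoord v i := by
  induction q with
  | zero => simp
  | succ q ih => rw [pow_succ', ← mulVec_mulVec, eigenCoord_mulVec, ih, pow_succ']; ring

lemma eigenCoord_eigenvector (i j : ι) :
    hA.eigenCoord (hA.eigenvectorBasis j).ofLp i = if i = j then 1 else 0 := by
  simp [eigenCoord, OrthonormalBasis.repr_self]

lemma sum_eigenvector_sq (j : ι) : ∑ i, (hA.eigenvectorBasis j).ofLp i ^ 2 = 1 := by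
  simp [← hA.sum_eigenCoord_sq, eigenCoord_eigenvector]

lemma setOf_exists_mulVec_eq_smul_eq_range_eigenvalues :
    {μ : ℝ | ∃ v : ι → ℝ, v ≠ 0 ∧ A *ᵥ v = μ • v} = Set.range hA.eigenvalues := by
  ext μ
  rw [← hA.spectrum_real_eq_range_eigenvalues, ← spectrum_toLin',
    ← Module.End.hasEigenvalue_iff_mem_spectrum, Module.End.hasEigenvalue_iff,
    Submodule.ne_bot_iff]
  simp [and_comm]

end Matrix.IsHermitian

lemma Matrix.isHermitian_transpose_mul_self {κ ι : Type*} [Fintype κ] (B : Matrix κ ι ℝ) :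
    (Bᵀ * B).IsHermitian := by
  simpa [conjTranspose_eq_transpose_of_trivial] using isHermitian_conjTranspose_mul_self B

lemma vecNorm_nonneg {n : ℕ} (v : Fin n → ℝ) : 0 ≤ vecNorm v := Real.sqrt_nonneg _

lemma vecNorm_sq {n : ℕ} (v : Fin n → ℝ) : vecNorm v ^ 2 = ∑ i, v i ^ 2 :=
  Real.sq_sqrt (by positivity)

lemma lmax_eq_eigenvalues_of_forall_le {n : ℕ} {A : Matrix (Fin n) (Fin n) ℝ}
    (hA : A.IsHermitian) {i₀ : Fin n} (hmax : ∀ i, hA.eigenvalues i ≤ hA.eigenvalues i₀) :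
    lmax A = hA.eigenvalues i₀ := by
  rw [lmax, hA.setOf_exists_mulVec_eq_smul_eq_range_eigenvalues]
  exact IsGreatest.csSup_eq ⟨Set.mem_range_self i₀, Set.forall_mem_range.2 hmax⟩

lemma abs_eigenvalues_pow_mul_eigenCoord_le_vecNorm {n : ℕ} {A : Matrix (Fin n) (Fin n) ℝ}
    (hA : A.IsHermitian) (q : ℕ) (v : Fin n → ℝ) (i : Fin n) :
    |hA.eigenvalues i ^ q * hA.eigenCoord v i| ≤ vecNorm ((A ^ q) *ᵥ v) := by
  rw [← Real.sqrt_sq_eq_abs, vecNorm, ← hA.sum_eigenCoord_sq]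
  refine Real.sqrt_le_sqrt ?_
  simp_rw [hA.eigenCoord_pow_mulVec]
  exact single_le_sum (f := fun j => (hA.eigenvalues j ^ q * hA.eigenCoord v j) ^ 2)
    (fun j _ => sq_nonneg _) (mem_univ i)

section Gram

variable {m n : ℕ} {B : Matrix (Fin m) (Fin n) ℝ}

lemma vecNorm_mulVec_sq (hA : (Bᵀ * B).IsHermitian) (w : Fin n → ℝ) :
    vecNorm (B *ᵥ w) ^ 2 = ∑ i, hA.eigenvalues i * hA.eigenCoord w i ^ 2 := by
  have hsq : ∑ i, (B *ᵥ w) i ^ 2 = (B *ᵥ w) ⬝ᵥ (B *ᵥ w) := by simp [dotProduct, sq]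
  have hgram : (B *ᵥ w) ⬝ᵥ (B *ᵥ w) = w ⬝ᵥ ((Bᵀ * B) *ᵥ w) := by
    rw [dotProduct_mulVec, ← mulVec_transpose, mulVec_mulVec, dotProduct_comm]
  rw [vecNorm_sq, hsq, hgram, hA.dotProduct_eq_sum_eigenCoord_mul]
  simp only [hA.eigenCoord_mulVec]
  exact sum_congr rfl fun i _ => by ring

lemma eigenvalues_transpose_mul_self_nonneg (hA : (Bᵀ * B).IsHermitian) (i : Fin n) :
    0 ≤ hA.eigenvalues i := by
  have h := vecNorm_mulVec_sq hA (hA.eigenvectorBasis i).ofLp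
  simp [hA.eigenCoord_eigenvector] at h
  exact h ▸ sq_nonneg _

lemma matNorm_eq_sqrt_eigenvalues (hA : (Bᵀ * B).IsHermitian) {i₀ : Fin n}
    (hmax : ∀ i, hA.eigenvalues i ≤ hA.eigenvalues i₀) :
    matNorm B = √(hA.eigenvalues i₀) := by
  have h0 := eigenvalues_transpose_mul_self_nonneg hA i₀
  refine IsGreatest.csSup_eq ⟨⟨(hA.eigenvectorBasis i₀).ofLp, ?_, ?_⟩, ?_⟩
  · simp [vecNorm, hA.sum_eigenvector_sq]
  · rw [← Real.sqrt_sq (vecNorm_nonneg _), vecNorm_mulVec_sq hA]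
    simp [hA.eigenCoord_eigenvector]
  · rintro _ ⟨v, hv, rfl⟩
    rw [Real.le_sqrt (vecNorm_nonneg _) h0, vecNorm_mulVec_sq hA]
    calc ∑ i, hA.eigenvalues i * hA.eigenCoord v i ^ 2
        ≤ ∑ i, hA.eigenvalues i₀ * hA.eigenCoord v i ^ 2 :=
          sum_le_sum fun i _ => mul_le_mul_of_nonneg_right (hmax i) (sq_nonneg _)
      _ = hA.eigenvalues i₀ * vecNorm v ^ 2 := by
          rw [← mul_sum, hA.sum_eigenCoord_sq, vecNorm_sq]
      _ ≤ hA.eigenvalues i₀ := mul_le_of_le_one_right h0 (pow_le_one₀ (vecNorm_nonneg v) hv)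

end Gram

lemma neg_pow_succ_le_sub_mul_pow {x K : ℝ} (hx : 0 ≤ x) (hK : 0 ≤ K) (k : ℕ) :
    -K ^ (k + 1) ≤ (x - K) * x ^ k := by
  rcases le_total K x with h | h
  · have := mul_nonneg (sub_nonneg.2 h) (pow_nonneg hx k)
    linarith [pow_nonneg hK (k + 1)]
  · calc -K ^ (k + 1) = -(K * K ^ k) := by ring
      _ ≤ -((K - x) * x ^ k) :=
          neg_le_neg (mul_le_mul (by linarith) (pow_le_pow_left₀ hx h k) (pow_nonneg hx k) hK)
      _ = (x - K) * x ^ k := by ring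

/-- Each `λᵢ` below `K = β λ₀` costs at most `K ^ (2q+1) cᵢ²` (`neg_pow_succ_le_sub_mul_pow`), and
the top term `(1 - β) λ₀ ^ (2q+1) c_{i₀}²` pays for all of them. -/
lemma mul_sum_sq_le_sum_mul_sq_of_dominant {ι : Type*} [Fintype ι] (lam c : ι → ℝ) {i₀ : ι}
    {β N : ℝ} (q : ℕ) (hlam : ∀ i, 0 ≤ lam i) (hβ0 : 0 ≤ β)
    (hc : ∑ i, c i ^ 2 ≤ N * c i₀ ^ 2) (hβ : β ^ (2 * q + 1) * N ≤ 1 - β) :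
    β * lam i₀ * ∑ i, (lam i ^ q * c i) ^ 2 ≤ ∑ i, lam i * (lam i ^ q * c i) ^ 2 := by
  set K := β * lam i₀
  have hK : 0 ≤ K := mul_nonneg hβ0 (hlam i₀)
  have hsq : ∀ i, (lam i ^ q * c i) ^ 2 = lam i ^ (2 * q) * c i ^ 2 := fun i => by ring
  set g : ι → ℝ := fun i => (lam i - K) * (lam i ^ q * c i) ^ 2 + K ^ (2 * q + 1) * c i ^ 2
  have hg : ∀ i, 0 ≤ g i := fun i => by
    have := mul_le_mul_of_nonneg_right
      (neg_pow_succ_le_sub_mul_pow (hlam i) hK (2 * q)) (sq_nonneg (c i))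
    simp only [g, hsq]
    linarith
  have hsum : ∑ i, g i = ∑ i, lam i * (lam i ^ q * c i) ^ 2 - K * ∑ i, (lam i ^ q * c i) ^ 2
      + K ^ (2 * q + 1) * ∑ i, c i ^ 2 := by
    simp only [g, sum_add_distrib, mul_sum, sub_mul, sum_sub_distrib]
  have hgap : K ^ (2 * q + 1) * N ≤ (1 - β) * lam i₀ ^ (2 * q + 1) := by
    rw [mul_pow, mul_right_comm]
    exact mul_le_mul_of_nonneg_right hβ (pow_nonneg (hlam i₀) _)
  have htop : g i₀ = ((1 - β) * lam i₀ ^ (2 * q + 1) + K ^ (2 * q + 1)) * c i₀ ^ 2 := by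
    simp only [g, K]; ring
  have hsingle := single_le_sum (fun i _ => hg i) (mem_univ i₀)
  have hweight := mul_le_mul_of_nonneg_left hc (pow_nonneg hK (2 * q + 1))
  have hgap' := mul_le_mul_of_nonneg_right hgap (sq_nonneg (c i₀))
  nlinarith [mul_nonneg (pow_nonneg hK (2 * q + 1)) (sq_nonneg (c i₀))]

lemma sq_one_sub_half_pow_mul_sq_le {n : ℕ} (hn : 1 ≤ n) {Δ : ℝ} (hΔ0 : 0 < Δ) (hΔ : Δ ≤ 1 / 2)
    {q : ℕ} (hq : 4 / Δ * Real.log (n / Δ) ≤ q) :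
    ((1 - Δ / 2) ^ 2) ^ (2 * q + 1) * (n : ℝ) ^ 2 ≤ 1 - (1 - Δ / 2) ^ 2 := by
  have hn' : (1 : ℝ) ≤ n := by exact_mod_cast hn
  have hx : 0 < (n : ℝ) / Δ := by positivity
  have hlog : 8 * Real.log (n / Δ) ≤ 2 * q * Δ := by
    have := mul_le_mul_of_nonneg_left hq (by positivity : (0 : ℝ) ≤ 2 * Δ)
    rwa [show 2 * Δ * (4 / Δ * Real.log (n / Δ)) = 8 * Real.log (n / Δ) by field_simp; ring,
      mul_right_comm] at this
  have hdecay : ((1 - Δ / 2) ^ 2) ^ (2 * q + 1) ≤ (Δ / n) ^ 8 :=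
    calc ((1 - Δ / 2) ^ 2) ^ (2 * q + 1) ≤ (1 - Δ / 2) ^ (4 * q) := by
          rw [← pow_mul]; exact pow_le_pow_of_le_one (by linarith) (by linarith) (by omega)
      _ ≤ Real.exp (-(Δ / 2)) ^ (4 * q) :=
          pow_le_pow_left₀ (by linarith) (by linarith [Real.add_one_le_exp (-(Δ / 2))]) _
      _ = Real.exp (-(2 * q * Δ)) := by rw [← Real.exp_nat_mul]; push_cast; ring_nf
      _ ≤ Real.exp (-(8 * Real.log (n / Δ))) := Real.exp_le_exp.2 (by linarith)
      _ = (Δ / n) ^ 8 := by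
          rw [show -(8 * Real.log (n / Δ)) = (8 : ℕ) * -Real.log (n / Δ) by push_cast; ring,
            Real.exp_nat_mul, Real.exp_neg, Real.exp_log hx, inv_div]
  have hsmall : (Δ / n) ^ 8 * (n : ℝ) ^ 2 ≤ Δ ^ 8 := by
    rw [div_pow, div_mul_eq_mul_div, div_le_iff₀ (by positivity)]
    exact mul_le_mul_of_nonneg_left (pow_le_pow_right₀ hn' (by norm_num)) (by positivity)
  have hΔ7 : Δ ^ 7 ≤ (1 / 2) ^ 7 := pow_le_pow_left₀ hΔ0.le hΔ 7
  nlinarith [mul_le_mul_of_nonneg_right hdecay (sq_nonneg (n : ℝ))]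

section PowerIterate

variable {m n : ℕ} {B : Matrix (Fin m) (Fin n) ℝ} (hA : (Bᵀ * B).IsHermitian) {i₀ : Fin n}
  (q : ℕ) {v : Fin n → ℝ}

lemma lmax_pow_div_le_vecNorm_pow_mulVec (hmax : ∀ i, hA.eigenvalues i ≤ hA.eigenvalues i₀)
    (hn : 1 ≤ n) (hv : 1 ≤ n * hA.eigenCoord v i₀ ^ 2) :
    lmax (Bᵀ * B) ^ q / n ≤ vecNorm (((Bᵀ * B) ^ q) *ᵥ v) := by
  have hn' : (1 : ℝ) ≤ n := by exact_mod_cast hn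
  have hc : 1 / (n : ℝ) ≤ |hA.eigenCoord v i₀| := by
    rw [div_le_iff₀ (by positivity)]
    nlinarith [abs_nonneg (hA.eigenCoord v i₀), sq_abs (hA.eigenCoord v i₀)]
  have hpow := pow_nonneg (eigenvalues_transpose_mul_self_nonneg hA i₀) q
  calc lmax (Bᵀ * B) ^ q / n = hA.eigenvalues i₀ ^ q * (1 / n) := by
        rw [lmax_eq_eigenvalues_of_forall_le hA hmax]; ring
    _ ≤ |hA.eigenvalues i₀ ^ q * hA.eigenCoord v i₀| := by
        rw [abs_mul, abs_of_nonneg hpow]; exact mul_le_mul_of_nonneg_left hc hpow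
    _ ≤ _ := abs_eigenvalues_pow_mul_eigenCoord_le_vecNorm hA q v i₀

lemma mul_matNorm_mul_vecNorm_le_vecNorm_mulVec
    (hmax : ∀ i, hA.eigenvalues i ≤ hA.eigenvalues i₀) {r N : ℝ} (hr : 0 ≤ r)
    (hv : ∑ i, v i ^ 2 ≤ N * hA.eigenCoord v i₀ ^ 2) (hrN : (r ^ 2) ^ (2 * q + 1) * N ≤ 1 - r ^ 2) :
    r * matNorm B * vecNorm (((Bᵀ * B) ^ q) *ᵥ v) ≤ vecNorm (B *ᵥ (((Bᵀ * B) ^ q) *ᵥ v)) := by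
  have h0 := eigenvalues_transpose_mul_self_nonneg hA i₀
  rw [matNorm_eq_sqrt_eigenvalues hA hmax, ← pow_le_pow_iff_left₀
    (mul_nonneg (mul_nonneg hr (Real.sqrt_nonneg _)) (vecNorm_nonneg _)) (vecNorm_nonneg _)
    two_ne_zero, mul_pow, mul_pow, Real.sq_sqrt h0, vecNorm_mulVec_sq hA,
    vecNorm_sq, ← hA.sum_eigenCoord_sq]
  simp only [hA.eigenCoord_pow_mulVec]
  exact mul_sum_sq_le_sum_mul_sq_of_dominant _ _ q (eigenvalues_transpose_mul_self_nonneg hA)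
    (sq_nonneg r) (hA.sum_eigenCoord_sq v ▸ hv) hrN

end PowerIterate

lemma card_le_two_mul_card_filter_of_involutive {α : Type*} [Fintype α] [DecidableEq α]
    {σ : α → α} (hσ : Function.Involutive σ) (p : α → Prop) [DecidablePred p]
    (h : ∀ a, p a ∨ p (σ a)) : Fintype.card α ≤ 2 * (univ.filter p).card := by
  have hcover : (univ : Finset α) ⊆ (univ.filter p) ∪ (univ.filter p).image σ := by
    intro a _
    rcases h a with ha | ha
    · exact mem_union_left _ (by simp [ha])
    · exact mem_union_right _ (mem_image.2 ⟨σ a, by simp [ha], hσ a⟩)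
  calc Fintype.card α ≤ (univ.filter p ∪ (univ.filter p).image σ).card := card_le_card hcover
    _ ≤ (univ.filter p).card + ((univ.filter p).image σ).card := card_union_le _ _
    _ ≤ 2 * (univ.filter p).card := by linarith [card_image_le (s := univ.filter p) (f := σ)]

section SignVectors

variable {ι : Type*} [Fintype ι]

def signVec (z : ι → Bool) : ι → ℝ := fun i => if z i then 1 else -1

lemma sum_signVec_sq (z : ι → Bool) : ∑ i, signVec z i ^ 2 = Fintype.card ι := by
  simp [signVec, apply_ite (· ^ 2)]

lemma abs_le_abs_dotProduct_signVec_or_update [DecidableEq ι] (u : ι → ℝ) (z : ι → Bool) (j : ι) :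
    |u j| ≤ |u ⬝ᵥ signVec z| ∨ |u j| ≤ |u ⬝ᵥ signVec (Function.update z j (!z j))| := by
  have hflip :
      signVec z - signVec (Function.update z j (!z j)) = Pi.single j (2 * signVec z j) := by
    ext i
    rcases eq_or_ne i j with rfl | hi
    · cases h : z i <;> simp [signVec, h] <;> norm_num
    · simp [signVec, hi]
  have hdiff : |u ⬝ᵥ signVec z - u ⬝ᵥ signVec (Function.update z j (!z j))| = 2 * |u j| := by
    rw [← dotProduct_sub, hflip, dotProduct_single, abs_mul, abs_mul]
    cases h : z j <;> simp [signVec, h, mul_comm]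
  by_contra! h
  linarith [abs_sub (u ⬝ᵥ signVec z) (u ⬝ᵥ signVec (Function.update z j (!z j)))]

lemma two_pow_le_two_mul_card_abs_le_abs_dotProduct_signVec [DecidableEq ι] (u : ι → ℝ) (j : ι) :
    2 ^ Fintype.card ι ≤ 2 * (univ.filter fun z : ι → Bool => |u j| ≤ |u ⬝ᵥ signVec z|).card := by
  have hσ : Function.Involutive fun z : ι → Bool => Function.update z j (!z j) := fun z => by
    simp
  simpa using card_le_two_mul_card_filter_of_involutive hσ _
    (abs_le_abs_dotProduct_signVec_or_update u · j)

end SignVectors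

open scoped Classical in
theorem power_method_random_start_general
    {m n : ℕ} (hn : 1 ≤ n) (B : Matrix (Fin m) (Fin n) ℝ)
    (Δ : ℝ) (hΔ0 : 0 < Δ) (hΔ : Δ ≤ 1 / 2)
    (q : ℕ) (hq : 4 / Δ * Real.log ((n : ℝ) / Δ) ≤ (q : ℝ)) :
    (1 : ℝ) / 2 ≤
      ((Finset.univ.filter fun z : Fin n → Bool =>
          lmax (Bᵀ * B) ^ q / (n : ℝ) ≤
            vecNorm (((Bᵀ * B) ^ q).mulVec fun i => if z i then (1 : ℝ) else -1) ∧
          (1 - Δ / 2) * matNorm B *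
              vecNorm (((Bᵀ * B) ^ q).mulVec fun i => if z i then (1 : ℝ) else -1) ≤
            vecNorm (B.mulVec (((Bᵀ * B) ^ q).mulVec
              fun i => if z i then (1 : ℝ) else -1))).card : ℝ) / 2 ^ n := by
  have hA := B.isHermitian_transpose_mul_self
  have : Nonempty (Fin n) := ⟨⟨0, hn⟩⟩
  obtain ⟨i₀, hmax⟩ := Finite.exists_max hA.eigenvalues
  set u := (hA.eigenvectorBasis i₀).ofLp
  obtain ⟨j, -, hj⟩ :=
    exists_le_of_sum_le (f := fun _ => (1 / n : ℝ)) (g := fun j => u j ^ 2) univ_nonempty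
      (by simp [u, hA.sum_eigenvector_sq, mul_inv_cancel₀ (by positivity : (n : ℝ) ≠ 0)])
  have hcount := two_pow_le_two_mul_card_abs_le_abs_dotProduct_signVec u j
  rw [Fintype.card_fin] at hcount
  rw [le_div_iff₀ (by positivity)]
  calc 1 / 2 * (2 : ℝ) ^ n ≤ (univ.filter fun z => |u j| ≤ |u ⬝ᵥ signVec z|).card := by
        rw [one_div_mul_eq_div, div_le_iff₀' two_pos]; exact_mod_cast hcount
    _ ≤ _ := Nat.cast_le.2 (Finset.card_le_card (monotone_filter_right _ fun z _ hzu => ?_))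
  have hz : 1 ≤ n * hA.eigenCoord (signVec z) i₀ ^ 2 := by
    rw [hA.eigenCoord_eq_dotProduct, dotProduct_comm, ← div_le_iff₀' (by positivity)]
    exact hj.trans (sq_le_sq.2 hzu)
  have hv : ∑ i, signVec z i ^ 2 ≤ n ^ 2 * hA.eigenCoord (signVec z) i₀ ^ 2 := by
    rw [sum_signVec_sq, Fintype.card_fin]; nlinarith
  exact ⟨lmax_pow_div_le_vecNorm_pow_mulVec hA q hmax hn hz,
    mul_matNorm_mul_vecNorm_le_vecNorm_mulVec hA q hmax (by linarith) hv
      (sq_one_sub_half_pow_mul_sq_le hn hΔ0 hΔ hq)⟩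

open scoped Classical in
/-- Power method guarantee: for nonzero `B`, `0 < Δ ≤ 1/2` and
`q ≥ (4/Δ)·ln(n/Δ)`, a uniformly random sign vector `z` satisfies, with probability at least
`1/2`, that `ŷ = (BᵀB)^q z` has `‖ŷ‖ ≥ λmax(BᵀB)^q/n` and `‖Bŷ‖ ≥ (1 - Δ/2)·‖B‖·‖ŷ‖`. -/
theorem power_method_random_start
    {m n : ℕ} (hn : 1 ≤ n) (B : Matrix (Fin m) (Fin n) ℝ) (hB : B ≠ 0)
    (Δ : ℝ) (hΔ0 : 0 < Δ) (hΔ : Δ ≤ 1 / 2)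
    (q : ℕ) (hq : 4 / Δ * Real.log ((n : ℝ) / Δ) ≤ (q : ℝ)) :
    (1 : ℝ) / 2 ≤
      ((Finset.univ.filter fun z : Fin n → Bool =>
          lmax (Bᵀ * B) ^ q / (n : ℝ) ≤
            vecNorm (((Bᵀ * B) ^ q).mulVec fun i => if z i then (1 : ℝ) else -1) ∧
          (1 - Δ / 2) * matNorm B *
              vecNorm (((Bᵀ * B) ^ q).mulVec fun i => if z i then (1 : ℝ) else -1) ≤
            vecNorm (B.mulVec (((Bᵀ * B) ^ q).mulVec
              fun i => if z i then (1 : ℝ) else -1))).card : ℝ) / 2 ^ n :=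
  power_method_random_start_general hn B Δ hΔ0 hΔ q hq
end
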